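/- arXiv:2312.10087 — 3 statements merged into one kernel-verified Lean document; each statement's English description precedes it below -/
import Mathlib

section
/- The set (ℝ ∪ {−∞})² with ⟨a,b⟩ ⊕ ⟨c,d⟩ = ⟨log(e^a+e^c), log(e^b+e^d)⟩ and ⟨a,b⟩ ⊗ ⟨c,d⟩ = ⟨a+c, log(e^{a+d}+e^{b+c})⟩ forms a semiring (the log entropy semiring) with additive identity ⟨−∞,−∞⟩ and multiplicative identity ⟨0,−∞⟩. -/
/-- LogSumExp addition on ℝ ∪ {−∞}, with conventions e^{−∞} = 0, log 0 = −∞. -/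
noncomputable def lse (a b : WithBot ℝ) : WithBot ℝ :=
  match a, b with
  | ⊥, y => y
  | x, ⊥ => x
  | (x : ℝ), (y : ℝ) => ((Real.log (Real.exp x + Real.exp y) : ℝ) : WithBot ℝ)

/-- Log entropy semiring addition: componentwise LogSumExp. -/
noncomputable def leAdd (x y : WithBot ℝ × WithBot ℝ) : WithBot ℝ × WithBot ℝ :=
  (lse x.1 y.1, lse x.2 y.2)

/-- Log entropy semiring multiplication: `⟨a,b⟩ ⊗ ⟨c,d⟩ = ⟨a+c, log(e^{a+d}+e^{b+c})⟩`,
with `⊥` absorbing for `WithBot` addition (a + (−∞) = −∞). -/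
noncomputable def leMul (x y : WithBot ℝ × WithBot ℝ) : WithBot ℝ × WithBot ℝ :=
  (x.1 + y.1, lse (x.1 + y.2) (x.2 + y.1))

/-- The axioms of a semiring for explicit operations. -/
def IsSemiring {R : Type*} (add mul : R → R → R) (z o : R) : Prop :=
  (∀ a b, add a b = add b a) ∧
  (∀ a b c, add (add a b) c = add a (add b c)) ∧
  (∀ a, add a z = a) ∧
  (∀ a b c, mul (mul a b) c = mul a (mul b c)) ∧
  (∀ a, mul a o = a) ∧ (∀ a, mul o a = a) ∧
  (∀ a b c, mul a (add b c) = add (mul a b) (mul a c)) ∧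
  (∀ a b c, mul (add b c) a = add (mul b a) (mul c a)) ∧
  (∀ a, mul a z = z) ∧ (∀ a, mul z a = z)

/-- Embedding of `WithBot ℝ` into `ℝ` via `exp`, with `⊥ ↦ 0`. -/
noncomputable def fE : WithBot ℝ → ℝ
  | ⊥ => 0
  | (x : ℝ) => Real.exp x

lemma fE_inj : Function.Injective fE := by
  intro a b h
  induction a using WithBot.recBotCoe with
  | bot =>
    induction b using WithBot.recBotCoe with
    | bot => rfl
    | coe y => exact absurd h.symm (ne_of_gt (by simpa [fE] using Real.exp_pos y))
  | coe x =>
    induction b using WithBot.recBotCoe with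
    | bot => exact absurd h (ne_of_gt (by simpa [fE] using Real.exp_pos x))
    | coe y => simpa [fE, Real.exp_eq_exp] using h

lemma fE_lse (a b : WithBot ℝ) : fE (lse a b) = fE a + fE b := by
  induction a using WithBot.recBotCoe <;> induction b using WithBot.recBotCoe <;>
    simp [lse, fE]
  exact Real.exp_log (by positivity)

lemma fE_add (a b : WithBot ℝ) : fE (a + b) = fE a * fE b := by
  induction a using WithBot.recBotCoe <;> induction b using WithBot.recBotCoe <;>
    simp [fE, ← WithBot.coe_add, Real.exp_add]

lemma fE_bot : fE ⊥ = 0 := rfl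

lemma fE_zero : fE ((0 : ℝ) : WithBot ℝ) = 1 := Real.exp_zero

lemma pair_ext {x y : WithBot ℝ × WithBot ℝ} (h1 : fE x.1 = fE y.1)
    (h2 : fE x.2 = fE y.2) : x = y :=
  Prod.ext (fE_inj h1) (fE_inj h2)

/-- the log entropy semiring on (ℝ ∪ {−∞})². -/
theorem log_entropy_semiring :
    IsSemiring leAdd leMul
      ((⊥, ⊥) : WithBot ℝ × WithBot ℝ)
      ((((0 : ℝ) : WithBot ℝ), (⊥ : WithBot ℝ))) := by
  refine ⟨?_, ?_, ?_, ?_, ?_, ?_, ?_, ?_, ?_, ?_⟩ <;> intros <;>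
    apply pair_ext <;>
    simp only [leAdd, leMul, fE_lse, fE_add, fE_bot, fE_zero] <;> ring
end

section
/- The set (ℝ ∪ {−∞})⁴ with componentwise LogSumExp addition ⟨a,b,c,d⟩ ⊕ ⟨f,g,h,i⟩ = ⟨log(e^a+e^f), log(e^b+e^g), log(e^c+e^h), log(e^d+e^i)⟩ and multiplication ⟨a,b,c,d⟩ ⊗ ⟨f,g,h,i⟩ = ⟨a+f, b+g, log(e^{b+h}+e^{c+g}), log(e^{b+i}+e^{d+g})⟩ forms a semiring (the log reverse-KL semiring) with additive identity ⟨−∞,−∞,−∞,−∞⟩ and multiplicative identity ⟨0,0,−∞,−∞⟩. -/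
/-- 4-tuples of ℝ ∪ {−∞}. -/
abbrev Quad := WithBot ℝ × WithBot ℝ × WithBot ℝ × WithBot ℝ

/-- Log reverse-KL semiring addition: componentwise LogSumExp. -/
noncomputable def klAdd (x y : Quad) : Quad :=
  (lse x.1 y.1, lse x.2.1 y.2.1, lse x.2.2.1 y.2.2.1, lse x.2.2.2 y.2.2.2)

/-- Log reverse-KL semiring multiplication
`⟨a,b,c,d⟩ ⊗ ⟨f,g,h,i⟩ = ⟨a+f, b+g, log(e^{b+h}+e^{c+g}), log(e^{b+i}+e^{d+g})⟩`,
with `⊥` absorbing for `WithBot` addition (a + (−∞) = −∞). -/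
noncomputable def klMul (x y : Quad) : Quad :=
  (x.1 + y.1, x.2.1 + y.2.1,
   lse (x.2.1 + y.2.2.1) (x.2.2.1 + y.2.1),
   lse (x.2.1 + y.2.2.2) (x.2.2.2 + y.2.1))

/-- Exponential map sending ⊥ to 0. -/
noncomputable def expE : WithBot ℝ → ℝ
  | ⊥ => 0
  | (x : ℝ) => Real.exp x

lemma expE_bot : expE ⊥ = 0 := rfl
lemma expE_coe (x : ℝ) : expE (x : WithBot ℝ) = Real.exp x := rfl

lemma expE_inj : Function.Injective expE := by
  intro a b h
  cases a with
  | bot => cases b with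
    | bot => rfl
    | coe y => exact absurd h.symm (ne_of_gt (Real.exp_pos y))
  | coe x => cases b with
    | bot => exact absurd h (ne_of_gt (Real.exp_pos x))
    | coe y => exact congrArg _ (Real.exp_injective h)

lemma expE_lse (a b : WithBot ℝ) : expE (lse a b) = expE a + expE b := by
  cases a with
  | bot => cases b <;> simp [lse, expE]
  | coe x => cases b with
    | bot => simp [lse, expE]
    | coe y =>
      have h : (0:ℝ) < Real.exp x + Real.exp y :=
        add_pos (Real.exp_pos x) (Real.exp_pos y)
      simp [lse, expE, Real.exp_log h]

lemma expE_add (a b : WithBot ℝ) : expE (a + b) = expE a * expE b := by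
  cases a with
  | bot => cases b <;> simp [expE]
  | coe x => cases b with
    | bot => simp [expE]
    | coe y => simp [expE, ← WithBot.coe_add, Real.exp_add]

lemma quad_ext {x y : Quad} (h1 : expE x.1 = expE y.1) (h2 : expE x.2.1 = expE y.2.1)
    (h3 : expE x.2.2.1 = expE y.2.2.1) (h4 : expE x.2.2.2 = expE y.2.2.2) : x = y := by
  obtain ⟨a, b, c, d⟩ := x; obtain ⟨e, f, g, h⟩ := y
  exact Prod.ext (expE_inj h1) (Prod.ext (expE_inj h2) (Prod.ext (expE_inj h3) (expE_inj h4)))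

/-- the log reverse-KL semiring on (ℝ ∪ {−∞})⁴. -/
theorem log_reverse_kl_semiring :
    IsSemiring klAdd klMul
      ((⊥, ⊥, ⊥, ⊥) : Quad)
      ((((0 : ℝ) : WithBot ℝ), ((0 : ℝ) : WithBot ℝ), (⊥ : WithBot ℝ), (⊥ : WithBot ℝ)) : Quad) := by
  refine ⟨?_, ?_, ?_, ?_, ?_, ?_, ?_, ?_, ?_, ?_⟩ <;>
    intros <;>
    apply quad_ext <;>
    simp only [klAdd, klMul, expE_lse, expE_add, expE_bot, expE_coe, Real.exp_zero] <;>
    ring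
end

section
/- Let G be a finite DAG and assign each edge e a dual-number weight ⟨p(e), p(e) log p(e)⟩ where p(e) > 0. Then the computation of G in the entropy semiring equals ⟨Σ_π p(π), Σ_π p(π) log p(π)⟩, where the sums range over all maximal paths π of G and p(π) = ∏_{e∈π} p(e). In particular, if Σ_π p(π) = 1, the negation of the second component is the Shannon entropy of the path distribution. -/
/-- Entropy semiring addition on ℝ². -/
def eAdd (x y : ℝ × ℝ) : ℝ × ℝ := (x.1 + y.1, x.2 + y.2)

/-- Entropy semiring multiplication on ℝ². -/
def eMul (x y : ℝ × ℝ) : ℝ × ℝ := (x.1 * y.1, x.1 * y.2 + x.2 * y.1)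

/-- The entropy-semiring weight of a path (product of its edge weights,
empty product is the unit ⟨1,0⟩). -/
def eProd {V : Type*} (w : V → V → ℝ × ℝ) : List V → ℝ × ℝ
  | [] => (1, 0)
  | [_] => (1, 0)
  | a :: b :: t => eMul (w a b) (eProd w (b :: t))

/-- The probability of a path: the product of its edge probabilities. -/
def pProd {V : Type*} (p : V → V → ℝ) : List V → ℝ
  | [] => 1
  | [_] => 1
  | a :: b :: t => p a b * pProd p (b :: t)

/-- `l` is a maximal path: from a root (no incoming edges) to a leaf
(no outgoing edges), with consecutive vertices joined by edges of `e`. -/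
def IsMaxPath {V : Type*} (e : V → V → Prop) (l : List V) : Prop :=
  (∃ r t, l = r :: t ∧ ∀ u, ¬ e u r) ∧ List.Chain' e l ∧
  (∃ v, l.getLast? = some v ∧ ∀ u, ¬ e v u)

lemma pProd_pos {V : Type*} (e : V → V → Prop) (p : V → V → ℝ)
    (hpos : ∀ u v, e u v → 0 < p u v) :
    ∀ l : List V, List.Chain' e l → 0 < pProd p l
  | [], _ => by simp [pProd]
  | [_], _ => by simp [pProd]
  | a :: b :: t, h => by
    simp only [List.Chain', List.isChain_cons_cons] at h
    exact mul_pos (hpos a b h.1) (pProd_pos e p hpos (b :: t) h.2)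

lemma eProd_eq {V : Type*} (e : V → V → Prop) (p : V → V → ℝ)
    (hpos : ∀ u v, e u v → 0 < p u v) :
    ∀ l : List V, List.Chain' e l →
      eProd (fun u v => (p u v, p u v * Real.log (p u v))) l
        = (pProd p l, pProd p l * Real.log (pProd p l))
  | [], _ => by simp [eProd, pProd]
  | [_], _ => by simp [eProd, pProd]
  | a :: b :: t, h => by
    simp only [List.Chain', List.isChain_cons_cons] at h
    have ih := eProd_eq e p hpos (b :: t) h.2
    have h1 := hpos a b h.1
    have h2 := pProd_pos e p hpos (b :: t) h.2
    simp only [eProd, pProd, ih, eMul]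
    refine Prod.ext rfl ?_
    simp only
    rw [Real.log_mul (ne_of_gt h1) (ne_of_gt h2)]
    ring

lemma foldr_eAdd {α : Type*} (f : α → ℝ × ℝ) :
    ∀ l : List α, (l.map f).foldr eAdd (0, 0)
      = ((l.map (fun x => (f x).1)).sum, (l.map (fun x => (f x).2)).sum)
  | [] => by simp
  | a :: t => by rw [List.map_cons, List.foldr_cons, foldr_eAdd f t]; simp [eAdd]

/-- assigning each edge the dual weight ⟨p(e), p(e) log p(e)⟩
with p(e) > 0, the computation of a finite DAG in the entropy semiring (the
⊕-sum over all maximal paths π of the ⊗-products of edge weights) equals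
⟨Σ_π p(π), Σ_π p(π) log p(π)⟩; in particular, when Σ_π p(π) = 1, the negation
of the second component is the Shannon entropy Σ_π −p(π) log p(π) of the path
distribution. -/
theorem entropy_semiring_computation
    {V : Type*} [Fintype V] [DecidableEq V]
    (e : V → V → Prop)
    (hacyc : WellFounded fun a b => e a b)
    (p : V → V → ℝ) (hpos : ∀ u v, e u v → 0 < p u v)
    (maxPaths : Finset (List V))
    (hmax : ∀ l, l ∈ maxPaths ↔ IsMaxPath e l) :
    ((maxPaths.toList.map
        (eProd (fun u v => (p u v, p u v * Real.log (p u v))))).foldr eAdd (0, 0)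
      = (∑ l ∈ maxPaths, pProd p l,
         ∑ l ∈ maxPaths, pProd p l * Real.log (pProd p l))) ∧
    ((∑ l ∈ maxPaths, pProd p l) = 1 →
      -((maxPaths.toList.map
          (eProd (fun u v => (p u v, p u v * Real.log (p u v))))).foldr eAdd (0, 0)).2
        = ∑ l ∈ maxPaths, -(pProd p l * Real.log (pProd p l))) := by
  have key : (maxPaths.toList.map
        (eProd (fun u v => (p u v, p u v * Real.log (p u v))))).foldr eAdd (0, 0)
      = (∑ l ∈ maxPaths, pProd p l,
         ∑ l ∈ maxPaths, pProd p l * Real.log (pProd p l)) := by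
    rw [foldr_eAdd]
    have hch : ∀ l ∈ maxPaths, List.Chain' e l := fun l hl => ((hmax l).1 hl).2.1
    refine Prod.ext ?_ ?_ <;> simp only
    · rw [Finset.sum_map_toList]
      exact Finset.sum_congr rfl fun l hl => by
        rw [eProd_eq e p hpos l (hch l hl)]
    · rw [Finset.sum_map_toList]
      exact Finset.sum_congr rfl fun l hl => by
        rw [eProd_eq e p hpos l (hch l hl)]
  refine ⟨key, fun _ => ?_⟩
  rw [key, Finset.sum_neg_distrib]
end
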